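/- (Theorem 2) Let Y be a square-integrable real random variable and let X₁, …, Xₙ be pairwise independent square-integrable real random variables, each with Var(Xᵢ) > 0, and assume Var(Y) > 0. Then for all real numbers α₁, …, αₙ such that Var(Σᵢ αᵢ Xᵢ) > 0, one has corr(Y, Σᵢ αᵢ Xᵢ)² ≤ Σᵢ corr(Y, Xᵢ)², where corr(A,B) = Cov(A,B)/(√Var(A) · √Var(B)). -/

import Mathlib

open MeasureTheory ProbabilityTheory

/-- Covariance of two real random variables: `Cov(X,Y) = E[(X - E[X]) * (Y - E[Y])]`. -/
noncomputable def cov {Ω : Type*} [MeasurableSpace Ω] (μ : Measure Ω) (X Y : Ω → ℝ) : ℝ :=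
  ∫ ω, (X ω - ∫ ω', X ω' ∂μ) * (Y ω - ∫ ω', Y ω' ∂μ) ∂μ

/-- Variance of a real random variable: `Var(X) = Cov(X,X)`. -/
noncomputable def var {Ω : Type*} [MeasurableSpace Ω] (μ : Measure Ω) (X : Ω → ℝ) : ℝ :=
  cov μ X X

/-- Correlation coefficient: `corr(X,Y) = Cov(X,Y) / (√Var(X) * √Var(Y))`. -/
noncomputable def corr {Ω : Type*} [MeasurableSpace Ω] (μ : Measure Ω) (X Y : Ω → ℝ) : ℝ :=
  cov μ X Y / (Real.sqrt (var μ X) * Real.sqrt (var μ Y))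

private lemma integrable_mul_of_memL2 {Ω : Type*} [MeasurableSpace Ω] {μ : Measure Ω}
    {f g : Ω → ℝ} (hf : MemLp f 2 μ) (hg : MemLp g 2 μ) :
    Integrable (fun ω => f ω * g ω) μ := by
  refine ((hf.integrable_sq.add hg.integrable_sq).div_const 2).mono' (hf.1.mul hg.1) ?_
  filter_upwards with ω
  rw [Real.norm_eq_abs, abs_mul]
  simp only [Pi.add_apply]
  nlinarith [sq_nonneg (|f ω| - |g ω|), sq_abs (f ω), sq_abs (g ω)]

/-- Theorem 2: `corr(Y, Σᵢ αᵢ Xᵢ)² ≤ Σᵢ corr(Y, Xᵢ)²`. -/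
theorem sq_corr_linear_combination_le {Ω : Type*} [MeasurableSpace Ω]
    (μ : Measure Ω) [IsProbabilityMeasure μ] {n : ℕ} (Y : Ω → ℝ) (X : Fin n → Ω → ℝ)
    (hY : MemLp Y 2 μ) (hX : ∀ i, MemLp (X i) 2 μ)
    (hindep : Pairwise fun i j => IndepFun (X i) (X j) μ)
    (hXpos : ∀ i, 0 < var μ (X i)) (hYpos : 0 < var μ Y) (α : Fin n → ℝ)
    (hVpos : 0 < var μ (fun ω => ∑ i, α i * X i ω)) :
    corr μ Y (fun ω => ∑ i, α i * X i ω) ^ 2 ≤ ∑ i, corr μ Y (X i) ^ 2 := by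
  set S : Ω → ℝ := fun ω => ∑ i, α i * X i ω with hS
  -- integrability facts
  have hXint : ∀ i, Integrable (X i) μ := fun i => (hX i).integrable one_le_two
  have hYint : Integrable Y μ := hY.integrable one_le_two
  -- centered variables
  set Z : Fin n → Ω → ℝ := fun i ω => X i ω - ∫ ω', X i ω' ∂μ with hZ
  set W : Ω → ℝ := fun ω => Y ω - ∫ ω', Y ω' ∂μ with hW
  have hZmem : ∀ i, MemLp (Z i) 2 μ := fun i => (hX i).sub (memLp_const _)
  have hWmem : MemLp W 2 μ := hY.sub (memLp_const _)
  have hZint0 : ∀ i, ∫ ω, Z i ω ∂μ = 0 := by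
    intro i
    simp [hZ, integral_sub (hXint i) (integrable_const _)]
  -- expectation of S
  have hES : ∫ ω', S ω' ∂μ = ∑ i, α i * ∫ ω', X i ω' ∂μ := by
    rw [hS, integral_finset_sum _ (fun i _ => (hXint i).const_mul _)]
    simp [integral_const_mul]
  -- centered S
  have hSc : ∀ ω, S ω - ∫ ω', S ω' ∂μ = ∑ i, α i * Z i ω := by
    intro ω
    rw [hES, hS, hZ]
    rw [← Finset.sum_sub_distrib]
    congr 1; ext i; ring
  -- cov linearity
  have hcov : cov μ Y S = ∑ i, α i * cov μ Y (X i) := by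
    unfold cov
    have : ∀ ω, W ω * (S ω - ∫ ω', S ω' ∂μ) = ∑ i, α i * (W ω * Z i ω) := by
      intro ω
      rw [hSc ω, Finset.mul_sum]
      congr 1; ext i; ring
    calc ∫ ω, (Y ω - ∫ ω', Y ω' ∂μ) * (S ω - ∫ ω', S ω' ∂μ) ∂μ
        = ∫ ω, ∑ i, α i * (W ω * Z i ω) ∂μ := by
          apply integral_congr_ae; filter_upwards with ω; exact this ω
      _ = ∑ i, α i * ∫ ω, W ω * Z i ω ∂μ := by
          rw [integral_finset_sum _ (fun i _ =>
            (integrable_mul_of_memL2 hWmem (hZmem i)).const_mul _)]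
          simp [integral_const_mul]
      _ = ∑ i, α i * cov μ Y (X i) := rfl
  -- variance of S
  have hvar : var μ S = ∑ i, α i ^ 2 * var μ (X i) := by
    unfold var cov
    have hptwise : ∀ ω, (S ω - ∫ ω', S ω' ∂μ) * (S ω - ∫ ω', S ω' ∂μ)
        = ∑ i, ∑ j, (α i * α j) * (Z i ω * Z j ω) := by
      intro ω
      rw [hSc ω, Finset.sum_mul_sum]
      congr 1; ext i; congr 1; ext j; ring
    have hcross : ∀ i j, i ≠ j → ∫ ω, Z i ω * Z j ω ∂μ = 0 := by
      intro i j hij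
      have hind : IndepFun (Z i) (Z j) μ := by
        have := (hindep hij).comp (φ := fun x => x - ∫ ω', X i ω' ∂μ)
          (ψ := fun x => x - ∫ ω', X j ω' ∂μ)
          (measurable_id.sub measurable_const) (measurable_id.sub measurable_const)
        exact this
      rw [hind.integral_fun_mul_eq_mul_integral (hZmem i).1 (hZmem j).1, hZint0 i, zero_mul]
    calc ∫ ω, (S ω - ∫ ω', S ω' ∂μ) * (S ω - ∫ ω', S ω' ∂μ) ∂μ
        = ∫ ω, ∑ i, ∑ j, (α i * α j) * (Z i ω * Z j ω) ∂μ := by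
          apply integral_congr_ae; filter_upwards with ω; exact hptwise ω
      _ = ∑ i, ∑ j, (α i * α j) * ∫ ω, Z i ω * Z j ω ∂μ := by
          rw [integral_finset_sum _ (fun i _ => integrable_finset_sum _ (fun j _ =>
            (integrable_mul_of_memL2 (hZmem i) (hZmem j)).const_mul _))]
          refine Finset.sum_congr rfl fun i _ => ?_
          rw [integral_finset_sum _ (fun j _ =>
            (integrable_mul_of_memL2 (hZmem i) (hZmem j)).const_mul _)]
          simp [integral_const_mul]
      _ = ∑ i, α i ^ 2 * var μ (X i) := by
          refine Finset.sum_congr rfl fun i _ => ?_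
          rw [Finset.sum_eq_single i]
          · unfold var cov; ring
          · intro j _ hji; rw [hcross i j (Ne.symm hji), mul_zero]
          · intro h; exact absurd (Finset.mem_univ i) h
  -- now pure algebra
  set c : Fin n → ℝ := fun i => cov μ Y (X i) with hc
  set v : Fin n → ℝ := fun i => var μ (X i) with hv
  have hvpos : ∀ i, 0 < v i := hXpos
  have hVY : 0 < var μ Y := hYpos
  have hcorrS : corr μ Y S ^ 2 = (∑ i, α i * c i) ^ 2 / (var μ Y * var μ S) := by
    unfold corr
    rw [hcov, div_pow, mul_pow, Real.sq_sqrt hVY.le, Real.sq_sqrt hVpos.le]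
  have hcorri : ∀ i, corr μ Y (X i) ^ 2 = c i ^ 2 / (var μ Y * v i) := by
    intro i
    unfold corr
    rw [div_pow, mul_pow, Real.sq_sqrt hVY.le, Real.sq_sqrt (hvpos i).le]
  rw [hcorrS]
  simp only [hcorri]
  -- Cauchy-Schwarz
  have hCS : (∑ i, α i * c i) ^ 2 ≤ (∑ i, α i ^ 2 * v i) * ∑ i, c i ^ 2 / v i := by
    have := Finset.sum_mul_sq_le_sq_mul_sq Finset.univ
      (fun i => α i * Real.sqrt (v i)) (fun i => c i / Real.sqrt (v i))
    have h1 : ∀ i : Fin n, (α i * Real.sqrt (v i)) * (c i / Real.sqrt (v i)) = α i * c i := by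
      intro i
      have : Real.sqrt (v i) ≠ 0 := (Real.sqrt_pos.mpr (hvpos i)).ne'
      field_simp
    have h2 : ∀ i : Fin n, (α i * Real.sqrt (v i)) ^ 2 = α i ^ 2 * v i := by
      intro i; rw [mul_pow, Real.sq_sqrt (hvpos i).le]
    have h3 : ∀ i : Fin n, (c i / Real.sqrt (v i)) ^ 2 = c i ^ 2 / v i := by
      intro i; rw [div_pow, Real.sq_sqrt (hvpos i).le]
    simpa only [h1, h2, h3] using this
  rw [← hvar] at hCS
  rw [div_le_iff₀ (by positivity)]
  calc (∑ i, α i * c i) ^ 2 ≤ var μ S * ∑ i, c i ^ 2 / v i := hCS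
    _ = (∑ i, c i ^ 2 / (var μ Y * v i)) * (var μ Y * var μ S) := by
        rw [Finset.sum_mul]
        rw [Finset.mul_sum]
        refine Finset.sum_congr rfl fun i _ => ?_
        have h1 : v i ≠ 0 := (hvpos i).ne'
        have h2 : var μ Y ≠ 0 := hVY.ne'
        field_simp
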